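/- Let L : ℝⁿ × ℝⁿ → ℝ be a smooth Lagrangian, G a canonical semispray coefficient family for L, and N^j_i = ∂Gʲ/∂yⁱ. For each point p = (x,y) define the bilinear form ω_p on ℝⁿ × ℝⁿ by ω_p((u₁,u₂),(v₁,v₂)) = Σ_{i,j} ∂²L/∂xʲ∂yⁱ(p) (u₁ʲ v₁ⁱ − v₁ʲ u₁ⁱ) + Σ_{i,j} ∂²L/∂yʲ∂yⁱ(p) (u₂ʲ v₁ⁱ − v₂ʲ u₁ⁱ), and let h_i(p) = (e_i, −(N^1_i(p),…,N^n_i(p))) ∈ ℝⁿ × ℝⁿ be the i-th adapted horizontal vector δ/δxⁱ. Then ω_p(h_i(p), h_j(p)) = 0 for all i, j and all p; equivalently, 2 Σ_k ( g_ik N^k_j − g_jk N^k_i ) = ∂²L/∂yⁱ∂xʲ − ∂²L/∂yʲ∂xⁱ at every point. That is, the horizontal subbundle of the canonical nonlinear connection is Lagrangian for the Cartan 2-form, so that ω_L = 2 g_ij δyʲ ∧ dxⁱ in the adapted basis. -/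

import Mathlib

open scoped ContDiff

/-- The tangent bundle of `ℝⁿ`, identified with `ℝⁿ × ℝⁿ` (base coordinates `x`,
fibre coordinates `y`). -/
abbrev TM (n : ℕ) := (Fin n → ℝ) × (Fin n → ℝ)

/-- Partial derivative of `F` in the `i`-th base coordinate `xⁱ`. -/
noncomputable def pdx {n : ℕ} (F : TM n → ℝ) (i : Fin n) (p : TM n) : ℝ :=
  fderiv ℝ F p (Pi.single i 1, 0)

/-- Partial derivative of `F` in the `i`-th fibre coordinate `yⁱ`. -/
noncomputable def pdy {n : ℕ} (F : TM n → ℝ) (i : Fin n) (p : TM n) : ℝ :=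
  fderiv ℝ F p (0, Pi.single i 1)

/-- The metric tensor `g_ij = ½ ∂²L/∂yⁱ∂yʲ` of a Lagrangian `L`. -/
noncomputable def gmetric {n : ℕ} (L : TM n → ℝ) (i j : Fin n) (p : TM n) : ℝ :=
  (1 / 2) * pdy (pdy L j) i p

/-- `G` is a canonical semispray coefficient family for `L`:
`G` is smooth and `4 Σ_k g_ik Gᵏ = Σ_h yʰ ∂²L/∂xʰ∂yⁱ − ∂L/∂xⁱ` at every point. -/
def IsSemisprayFamily {n : ℕ} (L : TM n → ℝ) (G : TM n → Fin n → ℝ) : Prop :=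
  ContDiff ℝ ∞ G ∧ ∀ (p : TM n) (i : Fin n),
    4 * ∑ k, gmetric L i k p * G p k = ∑ h, p.2 h * pdx (pdy L i) h p - pdx L i p

/-- Canonical nonlinear connection coefficients `N^j_i = ∂Gʲ/∂yⁱ`. -/
noncomputable def Ncoef {n : ℕ} (G : TM n → Fin n → ℝ) (j i : Fin n) (p : TM n) : ℝ :=
  pdy (fun q => G q j) i p

/-- The Cartan 2-form `ω_L = d θ_L` of `L`, as a bilinear form at the point `p`. -/
noncomputable def cartan2 {n : ℕ} (L : TM n → ℝ) (p u v : TM n) : ℝ :=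
  (∑ i, ∑ j, pdx (pdy L i) j p * (u.1 j * v.1 i - v.1 j * u.1 i))
  + ∑ i, ∑ j, pdy (pdy L i) j p * (u.2 j * v.1 i - v.2 j * u.1 i)

/-! Differentiating the semispray identity `4 g_ik Gᵏ = yʰ ∂²L/∂xʰ∂yⁱ − ∂L/∂xⁱ` in `yʲ` and
antisymmetrising in `i, j` kills the terms `(∂g_ik/∂yʲ) Gᵏ` and `yʰ ∂³L/∂yʲ∂xʰ∂yⁱ`, which are
symmetric in `i, j` by Schwarz's theorem. What remains is the identity
`2 (g_ik N^k_j − g_jk N^k_i) = ∂²L/∂yⁱ∂xʲ − ∂²L/∂yʲ∂xⁱ`, and `ω(δ/δxⁱ, δ/δxʲ)` is exactly the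
difference of its two sides. -/

theorem fderiv_fderiv_apply_comm {𝕜 E F : Type*} [NontriviallyNormedField 𝕜]
    [IsRCLikeNormedField 𝕜] [NormedAddCommGroup E] [NormedSpace 𝕜 E] [NormedAddCommGroup F]
    [NormedSpace 𝕜 F] {f : E → F} {x : E} (hf : ContDiffAt 𝕜 2 f x) (v w : E) :
    fderiv 𝕜 (fun y => fderiv 𝕜 f y v) x w = fderiv 𝕜 (fun y => fderiv 𝕜 f y w) x v := by
  have hf' : DifferentiableAt 𝕜 (fderiv 𝕜 f) x :=
    (hf.fderiv_right (m := 1) le_rfl).differentiableAt one_ne_zero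
  rw [fderiv_clm_apply hf' (differentiableAt_const v),
    fderiv_clm_apply hf' (differentiableAt_const w)]
  simpa using (hf.isSymmSndFDerivAt (by simp)).eq w v

section PartialDerivatives

variable {n : ℕ} {F f g : TM n → ℝ} {p : TM n}

theorem ContDiff.pdx {k m : WithTop ℕ∞} (hF : ContDiff ℝ k F) (hmk : m + 1 ≤ k) (i : Fin n) :
    ContDiff ℝ m (pdx F i) :=
  (ContinuousLinearMap.apply ℝ ℝ ((Pi.single i 1, 0) : TM n)).contDiff.comp
    (hF.fderiv_right hmk)

theorem ContDiff.pdy {k m : WithTop ℕ∞} (hF : ContDiff ℝ k F) (hmk : m + 1 ≤ k) (i : Fin n) :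
    ContDiff ℝ m (pdy F i) :=
  (ContinuousLinearMap.apply ℝ ℝ ((0, Pi.single i 1) : TM n)).contDiff.comp
    (hF.fderiv_right hmk)

theorem pdy_pdx_comm (hF : ContDiff ℝ 2 F) (i j : Fin n) : pdy (pdx F i) j = pdx (pdy F j) i :=
  funext fun _ => fderiv_fderiv_apply_comm hF.contDiffAt _ _

theorem pdy_pdy_comm (hF : ContDiff ℝ 2 F) (i j : Fin n) : pdy (pdy F i) j = pdy (pdy F j) i :=
  funext fun _ => fderiv_fderiv_apply_comm hF.contDiffAt _ _

theorem pdy_const_mul (hf : DifferentiableAt ℝ f p) (c : ℝ) (j : Fin n) :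
    pdy (fun q => c * f q) j p = c * pdy f j p := by
  simp [pdy, fderiv_const_mul hf]

theorem pdy_mul (hf : DifferentiableAt ℝ f p) (hg : DifferentiableAt ℝ g p) (j : Fin n) :
    pdy (fun q => f q * g q) j p = pdy f j p * g p + f p * pdy g j p := by
  simp [pdy, fderiv_fun_mul hf hg]
  ring

theorem pdy_sub (hf : DifferentiableAt ℝ f p) (hg : DifferentiableAt ℝ g p) (j : Fin n) :
    pdy (fun q => f q - g q) j p = pdy f j p - pdy g j p := by
  simp [pdy, fderiv_fun_sub hf hg]

theorem pdy_sum {ι : Type*} {s : Finset ι} {f : ι → TM n → ℝ}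
    (hf : ∀ i ∈ s, DifferentiableAt ℝ (f i) p) (j : Fin n) :
    pdy (fun q => ∑ i ∈ s, f i q) j p = ∑ i ∈ s, pdy (f i) j p := by
  simp [pdy, fderiv_fun_sum hf]

theorem pdy_snd_apply (h j : Fin n) :
    pdy (fun q : TM n => q.2 h) j p = (Pi.single j 1 : Fin n → ℝ) h := by
  have hlin : (fun q : TM n => q.2 h) =
      (ContinuousLinearMap.proj h).comp (ContinuousLinearMap.snd ℝ _ _) := rfl
  simp [pdy, hlin]

end PartialDerivatives

theorem cartan2_single_single {n : ℕ} (L : TM n → ℝ) (p : TM n) (i j : Fin n)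
    (a b : Fin n → ℝ) :
    cartan2 L p (Pi.single i 1, a) (Pi.single j 1, b)
      = pdx (pdy L j) i p - pdx (pdy L i) j p
        + ∑ k, (pdy (pdy L j) k p * a k - pdy (pdy L i) k p * b k) := by
  simp [cartan2, Pi.single_apply, mul_sub, Finset.sum_sub_distrib]

section Lagrangian

variable {n : ℕ} {L : TM n → ℝ} {G : TM n → Fin n → ℝ}

theorem pdy_pdy_eq_two_mul_gmetric (hL : ContDiff ℝ 2 L) (i j : Fin n) (p : TM n) :
    pdy (pdy L i) j p = 2 * gmetric L i j p := by
  rw [pdy_pdy_comm hL, gmetric]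
  ring

theorem differentiable_gmetric (hL : ContDiff ℝ 3 L) (i j : Fin n) :
    Differentiable ℝ (gmetric L i j) :=
  (contDiff_const.mul ((hL.pdy (m := 2) (by norm_num) j).pdy (m := 1) (by norm_num) i)
    ).differentiable one_ne_zero

theorem pdy_gmetric_comm (hL : ContDiff ℝ 3 L) (i j k : Fin n) (p : TM n) :
    pdy (gmetric L i k) j p = pdy (gmetric L j k) i p := by
  have hpdy : ContDiff ℝ 2 (pdy L k) := hL.pdy (by norm_num) k
  unfold gmetric
  rw [pdy_const_mul ((hpdy.pdy (m := 1) (by norm_num) i).differentiable one_ne_zero p),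
    pdy_const_mul ((hpdy.pdy (m := 1) (by norm_num) j).differentiable one_ne_zero p),
    pdy_pdy_comm hpdy]

theorem IsSemisprayFamily.four_mul_sum_gmetric_mul_Ncoef (hG : IsSemisprayFamily L G)
    (hL : ContDiff ℝ 3 L) (p : TM n) (i j : Fin n) :
    4 * ∑ k, gmetric L i k p * Ncoef G k j p
      = pdx (pdy L i) j p - pdy (pdx L i) j p
        + (∑ h, p.2 h * pdy (pdx (pdy L i) h) j p - 4 * ∑ k, pdy (gmetric L i k) j p * G p k) := by
  obtain ⟨hGsmooth, hGeq⟩ := hG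
  have hGk (k : Fin n) : Differentiable ℝ (fun q => G q k) :=
    differentiable_pi.1 (hGsmooth.differentiable (by simp)) k
  have hg (k : Fin n) : Differentiable ℝ (gmetric L i k) := differentiable_gmetric hL i k
  have hpdx : Differentiable ℝ (pdx L i) :=
    (hL.pdx (m := 1) (by norm_num) i).differentiable one_ne_zero
  have hpdxy (h : Fin n) : Differentiable ℝ (pdx (pdy L i) h) :=
    ((hL.pdy (m := 2) (by norm_num) i).pdx (m := 1) (by norm_num) h).differentiable one_ne_zero
  have hsnd (h : Fin n) : Differentiable ℝ (fun q : TM n => q.2 h) := by fun_prop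
  have hlhs : pdy (fun q => 4 * ∑ k, gmetric L i k q * G q k) j p
      = 4 * (∑ k, pdy (gmetric L i k) j p * G p k + ∑ k, gmetric L i k p * Ncoef G k j p) := by
    rw [pdy_const_mul (by fun_prop), pdy_sum (fun k _ => by fun_prop), ← Finset.sum_add_distrib]
    exact congrArg _ (Finset.sum_congr rfl fun k _ => pdy_mul (hg k p) (hGk k p) j)
  have hrhs : pdy (fun q => ∑ h, q.2 h * pdx (pdy L i) h q - pdx L i q) j p
      = pdx (pdy L i) j p + ∑ h, p.2 h * pdy (pdx (pdy L i) h) j p - pdy (pdx L i) j p := by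
    rw [pdy_sub (by fun_prop) (hpdx p), pdy_sum (fun h _ => by fun_prop),
      Finset.sum_congr rfl fun h _ => pdy_mul (hsnd h p) (hpdxy h p) j]
    simp [pdy_snd_apply, Finset.sum_add_distrib, Pi.single_apply]
  have hderiv := congrArg (fun F => pdy F j p) (funext fun q => hGeq q i)
  rw [hlhs, hrhs] at hderiv
  linarith

theorem IsSemisprayFamily.two_mul_sum_gmetric_mul_Ncoef_sub (hG : IsSemisprayFamily L G)
    (hL : ContDiff ℝ 3 L) (p : TM n) (i j : Fin n) :
    2 * ∑ k, (gmetric L i k p * Ncoef G k j p - gmetric L j k p * Ncoef G k i p)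
      = pdy (pdx L j) i p - pdy (pdx L i) j p := by
  have hL2 : ContDiff ℝ 2 L := hL.of_le (by norm_num)
  have hthird (h : Fin n) : pdy (pdx (pdy L i) h) j p = pdy (pdx (pdy L j) h) i p := by
    rw [← pdy_pdx_comm hL2, ← pdy_pdx_comm hL2, pdy_pdy_comm (hL.pdx (by norm_num) h)]
  have hij := hG.four_mul_sum_gmetric_mul_Ncoef hL p i j
  have hji := hG.four_mul_sum_gmetric_mul_Ncoef hL p j i
  -- afterwards `hij` and `hji` carry the same symmetric remainder
  simp only [hthird, pdy_gmetric_comm hL i j] at hij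
  rw [← pdy_pdx_comm hL2 j i] at hij
  rw [← pdy_pdx_comm hL2 i j] at hji
  rw [Finset.sum_sub_distrib]
  linarith

end Lagrangian

/-- the horizontal subbundle of the canonical nonlinear connection is
Lagrangian for the Cartan 2-form: `ω_p(δ/δxⁱ, δ/δxʲ) = 0`, equivalently
`2 Σ_k (g_ik N^k_j − g_jk N^k_i) = ∂²L/∂yⁱ∂xʲ − ∂²L/∂yʲ∂xⁱ`; hence
`ω_L = 2 g_ij δyʲ ∧ dxⁱ` in the adapted basis. -/
theorem horizontal_subbundle_is_lagrangian (n : ℕ) (L : TM n → ℝ)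
    (hL : ContDiff ℝ ∞ L) (G : TM n → Fin n → ℝ) (hG : IsSemisprayFamily L G) :
    (∀ (p : TM n) (i j : Fin n),
      cartan2 L p (Pi.single i 1, fun a => -(Ncoef G a i p))
        (Pi.single j 1, fun a => -(Ncoef G a j p)) = 0) ∧
    (∀ (p : TM n) (i j : Fin n),
      2 * ∑ k, (gmetric L i k p * Ncoef G k j p - gmetric L j k p * Ncoef G k i p)
        = pdy (pdx L j) i p - pdy (pdx L i) j p) := by
  have hL3 : ContDiff ℝ 3 L := hL.of_le (WithTop.coe_le_coe.mpr le_top)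
  have hL2 : ContDiff ℝ 2 L := hL3.of_le (by norm_num)
  have hanti := hG.two_mul_sum_gmetric_mul_Ncoef_sub hL3
  refine ⟨fun p i j => ?_, hanti⟩
  have hvert : ∑ k, (pdy (pdy L j) k p * -Ncoef G k i p - pdy (pdy L i) k p * -Ncoef G k j p)
      = 2 * ∑ k, (gmetric L i k p * Ncoef G k j p - gmetric L j k p * Ncoef G k i p) := by
    simp only [pdy_pdy_eq_two_mul_gmetric hL2, Finset.mul_sum]
    exact Finset.sum_congr rfl fun k _ => by ring
  rw [cartan2_single_single, hvert, hanti, ← pdy_pdx_comm hL2 i j, ← pdy_pdx_comm hL2 j i]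
  ring
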